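/- arXiv:math/0703694 — 3 statements merged into one kernel-verified Lean document; each statement's English description precedes it below -/
import Mathlib

section
/- Let (X,d) be a metric space, x₀ ∈ X, and let T, α, ε, K > 0 satisfy (2K+1)ε < 1/2. Let f : X × (0,T] → ℝ be a nonnegative function that is bounded on the set {x ∈ X : d(x₀,x) ≤ 1/2} × (0,T]. Suppose there exist x₁ ∈ X and t₁ ∈ (0,T] with d(x₀,x₁) ≤ ε and f(x₁,t₁)² ≥ α/t₁ + ε^{−2}. Then there exist x̄ ∈ X and t̄ ∈ (0,T] such that d(x₀,x̄) ≤ (2K+1)ε, f(x̄,t̄) ≥ ε^{−1}, f(x̄,t̄)² ≥ α/t̄, and f(x,t) ≤ 4 f(x̄,t̄) for every pair (x,t) ∈ X × (0,T] satisfying f(x,t)² ≥ α/t, t ≤ t̄, and d(x₀,x) ≤ d(x₀,x̄) + K / f(x̄,t̄). -/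
/-!
Argue by contradiction: if no point qualifies, every point `p` of the high-curvature set with
`d(x₀, p) ≤ (2K + 1) ε` and `f p ≥ 1/ε` has a neighbour `q` in that set, no later in time,
with `d(x₀, q) ≤ d(x₀, p) + K / f p` and `f q > 4 f p`. Along the chain started at `(x₁, t₁)`
the quantity `d(x₀, p) + 2K / f p` does not increase, so it stays below `(2K + 1) ε`, every
point of the chain qualifies for the next step, and `f` grows at least like `4ⁿ / ε` inside
the ball of radius `1/2`, contradicting boundedness.
-/

open Set

theorem not_bddAbove_image_of_forall_exists_mul_le {P : Type*} {S : Set P} {F : P → ℝ} {c : ℝ}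
    (hc : 1 < c) {p₀ : P} (hp₀ : p₀ ∈ S) (hF₀ : 0 < F p₀)
    (hstep : ∀ p ∈ S, ∃ q ∈ S, c * F p ≤ F q) :
    ¬ BddAbove (F '' S) := by
  have hgrowth : ∀ n : ℕ, ∃ p ∈ S, c ^ n * F p₀ ≤ F p := by
    intro n
    induction n with
    | zero => exact ⟨p₀, hp₀, by rw [pow_zero, one_mul]⟩
    | succ n ih =>
      obtain ⟨p, hp, hFp⟩ := ih
      obtain ⟨q, hq, hFq⟩ := hstep p hp
      refine ⟨q, hq, ?_⟩
      calc c ^ (n + 1) * F p₀ = c * (c ^ n * F p₀) := by ring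
        _ ≤ c * F p := by gcongr
        _ ≤ F q := hFq
  rintro ⟨B, hB⟩
  obtain ⟨n, hn⟩ := pow_unbounded_of_one_lt (B / F p₀) hc
  obtain ⟨p, hp, hFp⟩ := hgrowth n
  have hBlt : B < c ^ n * F p₀ := (div_lt_iff₀ hF₀).mp hn
  linarith [hB (mem_image_of_mem F hp)]

theorem add_two_mul_div_le_of_four_mul_lt {K Dp Dq Fp Fq : ℝ} (hK : 0 ≤ K) (hFp : 0 < Fp)
    (hDq : Dq ≤ Dp + K / Fp) (hF : 4 * Fp < Fq) :
    Dq + 2 * K / Fq ≤ Dp + 2 * K / Fp := by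
  have hFq : 2 * K / Fq ≤ K / Fp := by
    rw [div_le_div_iff₀ (by linarith) hFp]
    nlinarith
  have hsplit : 2 * K / Fp = K / Fp + K / Fp := by ring
  linarith

/-- Abstract point selection: `D p` plays the role of `d(x₀, p)`, `F` that of the curvature and
`R p q` that of `t_q ≤ t_p`. -/
theorem exists_forall_le_four_mul_of_bddAbove {P : Type*} (E : Set P) (R : P → P → Prop)
    (F D : P → ℝ) {ε K : ℝ} (hε : 0 < ε) (hK : 0 ≤ K)
    (hbdd : BddAbove (F '' {p ∈ E | D p ≤ (2 * K + 1) * ε}))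
    {p₀ : P} (hp₀ : p₀ ∈ E) (hD₀ : D p₀ ≤ ε) (hF₀ : ε⁻¹ ≤ F p₀) :
    ∃ p ∈ E, D p ≤ (2 * K + 1) * ε ∧ ε⁻¹ ≤ F p ∧
      ∀ q ∈ E, R p q → D q ≤ D p + K / F p → F q ≤ 4 * F p := by
  by_contra! hnone
  set S := {p ∈ E | ε⁻¹ ≤ F p ∧ D p + 2 * K / F p ≤ (2 * K + 1) * ε}
  have hpos : ∀ p ∈ S, 0 < F p := fun p hp => (inv_pos.mpr hε).trans_le hp.2.1
  have hS_sub : S ⊆ {p ∈ E | D p ≤ (2 * K + 1) * ε} := fun p hp =>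
    ⟨hp.1, by linarith [hp.2.2, div_nonneg (by linarith : 0 ≤ 2 * K) (hpos p hp).le]⟩
  have hp₀S : p₀ ∈ S := by
    refine ⟨hp₀, hF₀, ?_⟩
    have : 2 * K / F p₀ ≤ 2 * K * ε := by
      rw [div_le_iff₀ ((inv_pos.mpr hε).trans_le hF₀)]
      calc 2 * K = 2 * K * ε * ε⁻¹ := by field_simp
        _ ≤ 2 * K * ε * F p₀ := by gcongr
    linarith
  have hstep : ∀ p ∈ S, ∃ q ∈ S, 4 * F p ≤ F q := by
    intro p hp
    obtain ⟨q, hqE, -, hDq, hFq⟩ := hnone p hp.1 (hS_sub hp).2 hp.2.1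
    refine ⟨q, ⟨hqE, by linarith [hp.2.1, hpos p hp], ?_⟩, hFq.le⟩
    exact (add_two_mul_div_le_of_four_mul_lt hK (hpos p hp) hDq hFq).trans hp.2.2
  exact not_bddAbove_image_of_forall_exists_mul_le (by norm_num) hp₀S (hpos p₀ hp₀S) hstep
    (hbdd.mono (image_mono hS_sub))

theorem point_picking_claim_general {X : Type*} [MetricSpace X] (x₀ : X)
    (T α ε K : ℝ) (hα : 0 < α) (hε : 0 < ε) (hK : 0 < K)
    (hKε : (2*K + 1) * ε < 1/2)
    (f : X → ℝ → ℝ)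
    (hf_nonneg : ∀ x : X, ∀ t ∈ Set.Ioc (0:ℝ) T, 0 ≤ f x t)
    (hf_bdd : ∃ B : ℝ, ∀ x : X, ∀ t ∈ Set.Ioc (0:ℝ) T,
      dist x₀ x ≤ 1/2 → f x t ≤ B)
    (x₁ : X) (t₁ : ℝ) (ht₁ : t₁ ∈ Set.Ioc (0:ℝ) T)
    (hd₁ : dist x₀ x₁ ≤ ε)
    (hf₁ : α / t₁ + ε⁻¹^2 ≤ (f x₁ t₁)^2) :
    ∃ xb : X, ∃ tb : ℝ, tb ∈ Set.Ioc (0:ℝ) T ∧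
      dist x₀ xb ≤ (2*K + 1) * ε ∧
      ε⁻¹ ≤ f xb tb ∧
      α / tb ≤ (f xb tb)^2 ∧
      ∀ x : X, ∀ t ∈ Set.Ioc (0:ℝ) T,
        α / t ≤ (f x t)^2 → t ≤ tb →
        dist x₀ x ≤ dist x₀ xb + K / f xb tb →
        f x t ≤ 4 * f xb tb := by
  obtain ⟨B, hB⟩ := hf_bdd
  set E : Set (X × ℝ) := {p | p.2 ∈ Ioc 0 T ∧ α / p.2 ≤ f p.1 p.2 ^ 2}
  have hα₁ : 0 ≤ α / t₁ := div_nonneg hα.le ht₁.1.le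
  have hE₁ : (x₁, t₁) ∈ E := ⟨ht₁, by linarith [sq_nonneg ε⁻¹]⟩
  have hf₁' : ε⁻¹ ≤ f x₁ t₁ :=
    le_of_pow_le_pow_left₀ two_ne_zero (hf_nonneg x₁ t₁ ht₁) (by linarith)
  have hbdd : BddAbove ((fun p : X × ℝ => f p.1 p.2) ''
      {p ∈ E | dist x₀ p.1 ≤ (2 * K + 1) * ε}) := by
    refine ⟨B, ?_⟩
    rintro _ ⟨⟨x, t⟩, ⟨⟨ht, -⟩, hd⟩, rfl⟩
    exact hB x t ht (hd.trans hKε.le)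
  obtain ⟨⟨xb, tb⟩, ⟨htb, hαb⟩, hdb, hfb, hmax⟩ :=
    exists_forall_le_four_mul_of_bddAbove E (fun p q => q.2 ≤ p.2) (fun p => f p.1 p.2)
      (fun p => dist x₀ p.1) hε hK.le hbdd hE₁ hd₁ hf₁'
  exact ⟨xb, tb, htb, hdb, hfb, hαb, fun x t ht hαt htle hd => hmax (x, t) ⟨ht, hαt⟩ htle hd⟩

/-- Point-picking claim inside Lemma 7.4 (Perelman-style point selection), phrased for
an arbitrary nonnegative function `f` on a metric space times a time interval `(0,T]`. -/
theorem point_picking_claim {X : Type*} [MetricSpace X] (x₀ : X)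
    (T α ε K : ℝ) (hT : 0 < T) (hα : 0 < α) (hε : 0 < ε) (hK : 0 < K)
    (hKε : (2*K + 1) * ε < 1/2)
    (f : X → ℝ → ℝ)
    (hf_nonneg : ∀ x : X, ∀ t ∈ Set.Ioc (0:ℝ) T, 0 ≤ f x t)
    (hf_bdd : ∃ B : ℝ, ∀ x : X, ∀ t ∈ Set.Ioc (0:ℝ) T,
      dist x₀ x ≤ 1/2 → f x t ≤ B)
    (x₁ : X) (t₁ : ℝ) (ht₁ : t₁ ∈ Set.Ioc (0:ℝ) T)
    (hd₁ : dist x₀ x₁ ≤ ε)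
    (hf₁ : α / t₁ + ε⁻¹^2 ≤ (f x₁ t₁)^2) :
    ∃ xb : X, ∃ tb : ℝ, tb ∈ Set.Ioc (0:ℝ) T ∧
      dist x₀ xb ≤ (2*K + 1) * ε ∧
      ε⁻¹ ≤ f xb tb ∧
      α / tb ≤ (f xb tb)^2 ∧
      ∀ x : X, ∀ t ∈ Set.Ioc (0:ℝ) T,
        α / t ≤ (f x t)^2 → t ≤ tb →
        dist x₀ x ≤ dist x₀ xb + K / f xb tb →
        f x t ≤ 4 * f xb tb :=
  point_picking_claim_general x₀ T α ε K hα hε hK hKε f hf_nonneg hf_bdd x₁ t₁ ht₁ hd₁ hf₁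
end

section
/- Let (X,d) be a metric space, x₀ ∈ X, and let T, α, ε, K > 0 satisfy (2K+1)ε < 1/2. Let f : X × (0,T] → ℝ be a nonnegative function that is bounded on the set {x ∈ X : d(x₀,x) ≤ 1/2} × (0,T]. Suppose there exist x₁ ∈ X and t₁ ∈ (0,T] with d(x₀,x₁) ≤ ε and f(x₁,t₁)² ≥ α/t₁ + ε^{−2}. Then there exist x̄ ∈ X and t̄ ∈ (0,T] such that, setting Q = f(x̄,t̄), one has d(x₀,x̄) ≤ (2K+1)ε, Q ≥ ε^{−1}, Q² ≥ α/t̄, and f(x,t) ≤ 4Q for every pair (x,t) ∈ X × (0,T] with t̄ − (3/4)α Q^{−2} ≤ t ≤ t̄ and d(x,x̄) ≤ K Q^{−1}. -/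
/-!
Call `(x, t)` admissible if `f(x,t)` satisfies the lower bounds required of `Q` and `x` lies within
`(2K+1)ε - 2K f(x,t)⁻¹` of `x₀`. Admissible points stay in the ball of radius `1/2`, where `f` is
bounded, so `f` has a finite positive supremum `S` on them; pick an admissible `(x̄, t̄)` with
`f(x̄,t̄) > S/4`. A point of the parabolic neighbourhood of `(x̄, t̄)` with `f ≥ 4Q` would again be
admissible, hence would have `f ≤ S < 4Q`.
-/

open Set

theorem exists_mem_forall_lt_mul_of_bddAbove {ι : Type*} {s : Set ι} {q : ι → ℝ} {c : ℝ}
    (hc : 1 < c) (hbdd : BddAbove (q '' s)) {i₀ : ι} (hi₀ : i₀ ∈ s) (hq₀ : 0 < q i₀) :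
    ∃ i ∈ s, ∀ j ∈ s, q j < c * q i := by
  set S := sSup (q '' s)
  have hS : 0 < S := hq₀.trans_le (le_csSup hbdd (mem_image_of_mem q hi₀))
  obtain ⟨_, ⟨i, hi, rfl⟩, hSi⟩ :=
    exists_lt_of_lt_csSup ⟨q i₀, mem_image_of_mem q hi₀⟩ (div_lt_self hS hc)
  refine ⟨i, hi, fun j hj => ?_⟩
  calc q j ≤ S := le_csSup hbdd (mem_image_of_mem q hj)
    _ < c * q i := (div_lt_iff₀' (by linarith)).mp hSi

theorem le_four_mul_sq_mul_of_le_sub {α Q tb t : ℝ} (hQ : Q ≠ 0) (htb : α ≤ Q ^ 2 * tb)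
    (ht : tb - (3/4) * α * Q⁻¹ ^ 2 ≤ t) : α ≤ 4 * Q ^ 2 * t := by
  have hQQ : Q ^ 2 * Q⁻¹ ^ 2 = 1 := by field_simp
  have h := mul_le_mul_of_nonneg_left ht (by positivity : 0 ≤ 4 * Q ^ 2)
  have e : 4 * Q ^ 2 * (tb - (3/4) * α * Q⁻¹ ^ 2) = 4 * Q ^ 2 * tb - 3 * α * (Q ^ 2 * Q⁻¹ ^ 2) := by
    ring
  rw [e, hQQ] at h
  linarith

namespace ParabolicPointPicking

variable {X : Type*} [MetricSpace X] {x₀ : X} {T α ε K : ℝ} {f : X → ℝ → ℝ}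

-- The slack `2K f(x,t)⁻¹` pays for a jump of length `K Q⁻¹` to a point where `f ≥ 4Q`.
structure Admissible (x₀ : X) (T α ε K : ℝ) (f : X → ℝ → ℝ) (x : X) (t : ℝ) : Prop where
  mem_Ioc : t ∈ Ioc 0 T
  inv_le : ε⁻¹ ≤ f x t
  div_le_sq : α / t ≤ f x t ^ 2
  dist_le_sub : dist x₀ x ≤ (2 * K + 1) * ε - 2 * K * (f x t)⁻¹

theorem admissible_of_le_sq {x : X} {t : ℝ} (hα : 0 ≤ α) (hε : 0 < ε) (hK : 0 ≤ K)
    (ht : t ∈ Ioc 0 T) (hf : 0 ≤ f x t) (hd : dist x₀ x ≤ ε)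
    (hsq : α / t + ε⁻¹ ^ 2 ≤ f x t ^ 2) : Admissible x₀ T α ε K f x t := by
  have hαt : 0 ≤ α / t := div_nonneg hα ht.1.le
  have hinv : ε⁻¹ ≤ f x t := by nlinarith [sq_nonneg (f x t + ε⁻¹)]
  have hinv' : (f x t)⁻¹ ≤ ε := inv_le_of_inv_le₀ hε hinv
  exact ⟨ht, hinv, by nlinarith [sq_nonneg ε⁻¹], by nlinarith⟩

variable {x : X} {t : ℝ}

theorem Admissible.pos (hε : 0 < ε) (h : Admissible x₀ T α ε K f x t) : 0 < f x t :=
  (inv_pos.mpr hε).trans_le h.inv_le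

theorem Admissible.dist_le (hε : 0 < ε) (hK : 0 ≤ K) (h : Admissible x₀ T α ε K f x t) :
    dist x₀ x ≤ (2 * K + 1) * ε := by
  have : 0 ≤ 2 * K * (f x t)⁻¹ := by have := h.pos hε; positivity
  linarith [h.dist_le_sub]

theorem bddAbove_image_admissible (hε : 0 < ε) (hK : 0 ≤ K) (hKε : (2 * K + 1) * ε < 1/2)
    (hf_bdd : ∃ B : ℝ, ∀ x : X, ∀ t ∈ Ioc (0:ℝ) T, dist x₀ x ≤ 1/2 → f x t ≤ B) :
    BddAbove ((fun p : X × ℝ => f p.1 p.2) '' {p | Admissible x₀ T α ε K f p.1 p.2}) := by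
  obtain ⟨B, hB⟩ := hf_bdd
  refine ⟨B, ?_⟩
  rintro _ ⟨p, hp, rfl⟩
  exact hB _ _ hp.mem_Ioc ((hp.dist_le hε hK).trans hKε.le)

theorem Admissible.of_parabolic {xb : X} {tb : ℝ} (hε : 0 < ε) (hK : 0 ≤ K)
    (hb : Admissible x₀ T α ε K f xb tb) (ht : t ∈ Ioc 0 T)
    (ht_ge : tb - (3/4) * α * (f xb tb)⁻¹ ^ 2 ≤ t) (hd : dist x xb ≤ K * (f xb tb)⁻¹)
    (hf : 4 * f xb tb ≤ f x t) : Admissible x₀ T α ε K f x t := by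
  set Q := f xb tb
  have hQ : 0 < Q := hb.pos hε
  have hsq : 4 * Q ^ 2 ≤ f x t ^ 2 := by nlinarith
  have hαt : α ≤ 4 * Q ^ 2 * t :=
    le_four_mul_sq_mul_of_le_sub hQ.ne' ((div_le_iff₀ hb.mem_Ioc.1).mp hb.div_le_sq) ht_ge
  have hinv : 2 * K * (f x t)⁻¹ ≤ K * Q⁻¹ := by
    have : (f x t)⁻¹ ≤ (4 * Q)⁻¹ := inv_anti₀ (by positivity) hf
    rw [mul_inv] at this
    nlinarith [inv_pos.mpr hQ]
  refine ⟨ht, by linarith [hb.inv_le], ?_, ?_⟩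
  · rw [div_le_iff₀ ht.1]
    nlinarith [ht.1]
  · linarith [dist_triangle_right x₀ x xb, hb.dist_le_sub]

end ParabolicPointPicking

open ParabolicPointPicking in
theorem parabolic_point_picking_general {X : Type*} [MetricSpace X] (x₀ : X)
    (T α ε K : ℝ) (hα : 0 < α) (hε : 0 < ε) (hK : 0 < K)
    (hKε : (2*K + 1) * ε < 1/2)
    (f : X → ℝ → ℝ)
    (hf_nonneg : ∀ x : X, ∀ t ∈ Set.Ioc (0:ℝ) T, 0 ≤ f x t)
    (hf_bdd : ∃ B : ℝ, ∀ x : X, ∀ t ∈ Set.Ioc (0:ℝ) T,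
      dist x₀ x ≤ 1/2 → f x t ≤ B)
    (x₁ : X) (t₁ : ℝ) (ht₁ : t₁ ∈ Set.Ioc (0:ℝ) T)
    (hd₁ : dist x₀ x₁ ≤ ε)
    (hf₁ : α / t₁ + ε⁻¹^2 ≤ (f x₁ t₁)^2) :
    ∃ xb : X, ∃ tb : ℝ, tb ∈ Set.Ioc (0:ℝ) T ∧
      dist x₀ xb ≤ (2*K + 1) * ε ∧
      ε⁻¹ ≤ f xb tb ∧
      α / tb ≤ (f xb tb)^2 ∧
      ∀ x : X, ∀ t ∈ Set.Ioc (0:ℝ) T,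
        tb - (3/4) * α * (f xb tb)⁻¹^2 ≤ t → t ≤ tb →
        dist x xb ≤ K * (f xb tb)⁻¹ →
        f x t ≤ 4 * f xb tb := by
  have h₁ : Admissible x₀ T α ε K f x₁ t₁ :=
    admissible_of_le_sq hα.le hε hK.le ht₁ (hf_nonneg x₁ t₁ ht₁) hd₁ hf₁
  obtain ⟨⟨xb, tb⟩, hb, hmax⟩ := exists_mem_forall_lt_mul_of_bddAbove (by norm_num : (1:ℝ) < 4)
    (bddAbove_image_admissible hε hK.le hKε hf_bdd)
    (show (x₁, t₁) ∈ {p : X × ℝ | Admissible x₀ T α ε K f p.1 p.2} from h₁) (h₁.pos hε)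
  refine ⟨xb, tb, hb.mem_Ioc, hb.dist_le hε hK.le, hb.inv_le, hb.div_le_sq, ?_⟩
  intro x t ht ht_ge _ hd
  by_contra! hlt
  exact (hmax (x, t) (hb.of_parabolic hε hK.le ht ht_ge hd hlt.le)).not_gt hlt

/-- Abstract content of Lemma 7.4: existence of a point `(xb, tb)` controlling a full
parabolic neighbourhood, phrased for an arbitrary nonnegative function `f` on a
metric space times a time interval `(0,T]`. -/
theorem parabolic_point_picking {X : Type*} [MetricSpace X] (x₀ : X)
    (T α ε K : ℝ) (hT : 0 < T) (hα : 0 < α) (hε : 0 < ε) (hK : 0 < K)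
    (hKε : (2*K + 1) * ε < 1/2)
    (f : X → ℝ → ℝ)
    (hf_nonneg : ∀ x : X, ∀ t ∈ Set.Ioc (0:ℝ) T, 0 ≤ f x t)
    (hf_bdd : ∃ B : ℝ, ∀ x : X, ∀ t ∈ Set.Ioc (0:ℝ) T,
      dist x₀ x ≤ 1/2 → f x t ≤ B)
    (x₁ : X) (t₁ : ℝ) (ht₁ : t₁ ∈ Set.Ioc (0:ℝ) T)
    (hd₁ : dist x₀ x₁ ≤ ε)
    (hf₁ : α / t₁ + ε⁻¹^2 ≤ (f x₁ t₁)^2) :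
    ∃ xb : X, ∃ tb : ℝ, tb ∈ Set.Ioc (0:ℝ) T ∧
      dist x₀ xb ≤ (2*K + 1) * ε ∧
      ε⁻¹ ≤ f xb tb ∧
      α / tb ≤ (f xb tb)^2 ∧
      ∀ x : X, ∀ t ∈ Set.Ioc (0:ℝ) T,
        tb - (3/4) * α * (f xb tb)⁻¹^2 ≤ t → t ≤ tb →
        dist x xb ≤ K * (f xb tb)⁻¹ →
        f x t ≤ 4 * f xb tb :=
  parabolic_point_picking_general x₀ T α ε K hα hε hK hKε f hf_nonneg hf_bdd x₁ t₁ ht₁ hd₁ hf₁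
end

section
/- Let (X,d) be a metric space, x₀ ∈ X, T > 0, and ε ∈ (0, 1/10]. Let f : X × [0,T] → ℝ be a nonnegative function that is bounded on the set {x ∈ X : d(x₀,x) ≤ 1/2} × [0,T]. Suppose there exist x₁ ∈ X and t₁ ∈ [0,T] with d(x₀,x₁) ≤ ε and f(x₁,t₁) > ε^{−1}. Then there exist x̄ ∈ X and t̄ ∈ [0,T] such that, setting Q = f(x̄,t̄), one has d(x₀,x̄) ≤ 3ε, Q ≥ ε^{−1}, and f(x,t) ≤ 4Q for every pair (x,t) ∈ X × [0,T] with d(x̄,x) ≤ Q^{−1} and 0 ≤ t ≤ t̄. -/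
/-- Point-picking claim inside Theorem 7.5: construction of the point `(xb, tb)` by a
finite doubling sequence, phrased for an arbitrary nonnegative bounded function `f`
on a metric space times the time interval `[0,T]`. -/
theorem doubling_point_picking {X : Type*} [MetricSpace X] (x₀ : X)
    (T ε : ℝ) (hT : 0 < T) (hε : ε ∈ Set.Ioc (0:ℝ) (1/10))
    (f : X → ℝ → ℝ)
    (hf_nonneg : ∀ x : X, ∀ t ∈ Set.Icc (0:ℝ) T, 0 ≤ f x t)
    (hf_bdd : ∃ B : ℝ, ∀ x : X, ∀ t ∈ Set.Icc (0:ℝ) T,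
      dist x₀ x ≤ 1/2 → f x t ≤ B)
    (x₁ : X) (t₁ : ℝ) (ht₁ : t₁ ∈ Set.Icc (0:ℝ) T)
    (hd₁ : dist x₀ x₁ ≤ ε)
    (hf₁ : ε⁻¹ < f x₁ t₁) :
    ∃ xb : X, ∃ tb : ℝ, tb ∈ Set.Icc (0:ℝ) T ∧
      dist x₀ xb ≤ 3 * ε ∧
      ε⁻¹ ≤ f xb tb ∧
      ∀ x : X, ∀ t ∈ Set.Icc (0:ℝ) T,
        dist xb x ≤ (f xb tb)⁻¹ → t ≤ tb →
        f x t ≤ 4 * f xb tb := by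
  obtain ⟨hε0, hε10⟩ := hε
  have hεinv : 0 < ε⁻¹ := inv_pos.mpr hε0
  by_contra h
  push_neg at h
  -- doubling sequence
  have key : ∀ n : ℕ, ∃ x t, t ∈ Set.Icc (0:ℝ) T ∧
      dist x₀ x ≤ (7/3 - (4/3) * ((4:ℝ)⁻¹)^n) * ε ∧ 4^n * ε⁻¹ ≤ f x t := by
    intro n
    induction n with
    | zero =>
      refine ⟨x₁, t₁, ht₁, ?_, ?_⟩
      · nlinarith
      · simpa using hf₁.le
    | succ n ih =>
      obtain ⟨x, t, htm, hdx, hfx⟩ := ih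
      have hpow : (1:ℝ) ≤ 4^n := one_le_pow₀ (by norm_num)
      have hpowinv : (0:ℝ) < ((4:ℝ)⁻¹)^n := by positivity
      have hpowinv1 : ((4:ℝ)⁻¹)^n ≤ 1 := pow_le_one₀ (by norm_num) (by norm_num)
      have hfpos : 0 < f x t := lt_of_lt_of_le (by nlinarith) hfx
      have hf1 : ε⁻¹ ≤ f x t := le_trans (by nlinarith) hfx
      have hd3 : dist x₀ x ≤ 3 * ε := le_trans hdx (by nlinarith)
      obtain ⟨x', t', ht', hdd, _, hgt⟩ := h x t htm hd3 hf1
      refine ⟨x', t', ht', ?_, ?_⟩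
      · have hinv : (f x t)⁻¹ ≤ ε * ((4:ℝ)⁻¹)^n := by
          have h1 : (f x t)⁻¹ ≤ (4^n * ε⁻¹)⁻¹ :=
            inv_anti₀ (by positivity) hfx
          have h2 : ((4:ℝ)^n * ε⁻¹)⁻¹ = ε * ((4:ℝ)⁻¹)^n := by
            rw [mul_inv, inv_inv, inv_pow]; ring
          linarith [h2 ▸ h1]
        calc dist x₀ x' ≤ dist x₀ x + dist x x' := dist_triangle _ _ _
          _ ≤ (7/3 - (4/3) * ((4:ℝ)⁻¹)^n) * ε + ε * ((4:ℝ)⁻¹)^n :=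
              add_le_add hdx (le_trans hdd hinv)
          _ ≤ (7/3 - (4/3) * ((4:ℝ)⁻¹)^(n+1)) * ε := by
              rw [pow_succ]; nlinarith
      · have : (4:ℝ)^(n+1) * ε⁻¹ = 4 * (4^n * ε⁻¹) := by ring
        rw [this]
        nlinarith
  obtain ⟨B, hB⟩ := hf_bdd
  obtain ⟨n, hn⟩ := pow_unbounded_of_one_lt (B * ε) (by norm_num : (1:ℝ) < 4)
  obtain ⟨x, t, htm, hdx, hfx⟩ := key n
  have hhalf : dist x₀ x ≤ 1/2 := by
    have hpowinv : (0:ℝ) < ((4:ℝ)⁻¹)^n := by positivity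
    nlinarith
  have hle : f x t ≤ B := hB x t htm hhalf
  have : B * ε < 4^n := hn
  have h4 : B < 4^n * ε⁻¹ := by
    have h5 := mul_lt_mul_of_pos_right this hεinv
    rwa [mul_assoc, mul_inv_cancel₀ hε0.ne', mul_one] at h5
  linarith
end
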